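/- Let 𝒜 = {n : ℤ | ∃ x y : ℤ, gcd(x, y) = 1 ∧ n = 3x² − y²}, ℬ = {n : ℤ | ∃ x y : ℤ, gcd(x, y) = 1 ∧ n = x² + y²}, and 𝒞 = {n : ℤ | ∃ x y : ℤ, gcd(x, y) = 1 ∧ n = 2(x² − xy + y²)}. Then 𝒞 ∩ 𝒜 is a proper subset of ℬ, i.e., 𝒞 ∩ 𝒜 ⊆ ℬ and ℬ ⊄ 𝒞 ∩ 𝒜. -/

import Mathlib

/-!
Write `n = 2m` with `m = x² - xy + y²`. For coprime `x, y` the number `m` is odd, and it is prime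
to `3`: modulo `9`, `3 ∣ m` would force `m ≡ 3` from this form but `m ≡ 6` from `2m = 3u² - v²`.
The identity `((2x - y)u)² + (yv)² = 2m(2u² - y²)`, with `yv` prime to `m`, makes `-1` a square
modulo `m`, say `m ∣ s² + 1`. In `ℤ[i]` the gcd of `m` and `s + i` then has norm exactly `m`,
giving a primitive representation `m = a² + b²`, and `2m = (a + b)² + (a - b)²` is primitive
since `m` is odd. Conversely `1 ∈ ℬ`, whereas every element of `𝒞` is even.
-/

open Zsqrtd

theorem GaussianInt.dvd_norm_gcd_intCast {m : ℤ} {w : GaussianInt} (h : m ∣ w.norm) :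
    m ∣ (EuclideanDomain.gcd (m : GaussianInt) w).norm := by
  obtain ⟨k, hk⟩ := h
  set d := EuclideanDomain.gcd (m : GaussianInt) w
  set α := EuclideanDomain.gcdA (m : GaussianInt) w
  set β := EuclideanDomain.gcdB (m : GaussianInt) w
  have hw : w * star w = m * k := by rw [← norm_eq_mul_conj, hk, Int.cast_mul]
  have hbez : d = m * α + w * β := EuclideanDomain.gcd_eq_gcd_ab _ _
  have hstar : star d = m * star α + star w * star β := by
    rw [hbez, star_add, star_mul, star_mul, star_intCast, mul_comm, mul_comm (star β)]
  rw [← intCast_dvd_intCast (d := -1), norm_eq_mul_conj]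
  exact ⟨α * star d + w * β * star α + k * β * star β, by
    linear_combination star d * hbez + w * β * hstar + β * star β * hw⟩

theorem Int.exists_isCoprime_sq_add_sq_of_dvd_sq_add_one {m s : ℤ} (hm : 0 < m) (hodd : Odd m)
    (hs : m ∣ s ^ 2 + 1) : ∃ a b : ℤ, IsCoprime a b ∧ m = a ^ 2 + b ^ 2 := by
  set w : GaussianInt := ⟨s, 1⟩
  set d := EuclideanDomain.gcd (m : GaussianInt) w
  have hdm : d ∣ m := EuclideanDomain.gcd_dvd_left _ _
  have hdw : d ∣ w := EuclideanDomain.gcd_dvd_right _ _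
  have hstar_dm : star d ∣ m := by
    simpa only [starRingEnd_apply, star_intCast] using map_dvd (starRingEnd GaussianInt) hdm
  have hstar_dw : star d ∣ star w := map_dvd (starRingEnd GaussianInt) hdw
  have hm_dvd_norm : m ∣ d.norm := GaussianInt.dvd_norm_gcd_intCast <| by
    rwa [norm_def, show w.re * w.re - -1 * w.im * w.im = s ^ 2 + 1 by dsimp [w]; ring]
  -- a common divisor of `d` and `star d` divides both `m` and `w - star w = 2i`
  have hcop : IsCoprime d (star d) := by
    refine IsRelPrime.isCoprime fun g hgd hgd' => ?_
    have hm2 : IsCoprime (m : GaussianInt) 2 := by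
      simpa using (Int.isCoprime_two_right.2 hodd).map (Int.castRingHom GaussianInt)
    have htwo : (2 : GaussianInt) = (w - star w) * ⟨0, -1⟩ := by ext <;> simp [w]
    exact hm2.isUnit_of_dvd' (hgd.trans hdm)
      (htwo ▸ (dvd_sub (hgd.trans hdw) (hgd'.trans hstar_dw)).mul_right _)
  have hnorm_dvd : d.norm ∣ m := by
    rw [← intCast_dvd_intCast (d := -1), norm_eq_mul_conj]
    exact hcop.mul_dvd hdm hstar_dm
  have hnorm : d.norm = m :=
    Int.dvd_antisymm (GaussianInt.norm_nonneg d) hm.le hnorm_dvd hm_dvd_norm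
  refine ⟨d.re, d.im, isCoprime_of_dvd_isCoprime (by simpa [w] using isCoprime_one_right) hdw, ?_⟩
  rw [← hnorm, norm_def]
  ring

theorem Int.exists_dvd_sq_add_one_of_dvd_sq_add_sq {m a b : ℤ} (h : m ∣ a ^ 2 + b ^ 2)
    (hb : IsCoprime b m) : ∃ s, m ∣ s ^ 2 + 1 := by
  obtain ⟨k, hk⟩ := h
  obtain ⟨c, t, hct⟩ := hb
  exact ⟨a * c, c ^ 2 * k + t * (c * b + 1), by linear_combination c ^ 2 * hk - (c * b + 1) * hct⟩

theorem isCoprime_add_sub_of_odd_sq_add_sq {a b : ℤ} (h : IsCoprime a b)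
    (hodd : Odd (a ^ 2 + b ^ 2)) : IsCoprime (a + b) (a - b) := by
  have h2 : IsCoprime (a + b) 2 := by
    rw [Int.isCoprime_two_right, ← Int.not_even_iff_odd] at *
    simpa only [Int.even_add, Int.even_pow, two_ne_zero, ne_eq, not_false_eq_true, and_true]
      using hodd
  have hb : IsCoprime (a + b) b := by simpa using h.add_mul_right_left 1
  have := (h2.mul_right hb).neg_right.add_mul_left_right 1
  rwa [show -(2 * b) + (a + b) * 1 = a - b by ring] at this

theorem three_mul_intCast_zmod_nine_eq_zero_iff (z : ℤ) : 3 * (z : ZMod 9) = 0 ↔ 3 ∣ z := by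
  rw [show (3 : ZMod 9) = ((3 : ℤ) : ZMod 9) by norm_num, ← Int.cast_mul,
    ZMod.intCast_zmod_eq_zero_iff_dvd, show ((9 : ℕ) : ℤ) = 3 * 3 by norm_num,
    Int.mul_dvd_mul_iff_left three_ne_zero]

theorem ZMod.sq_sub_mul_add_sq_eq_three : ∀ x y : ZMod 9, 3 * x ≠ 0 ∨ 3 * y ≠ 0 →
    3 * (x ^ 2 - x * y + y ^ 2) = 0 → x ^ 2 - x * y + y ^ 2 = 3 := by
  decide

theorem ZMod.three_mul_sq_sub_sq_ne_six : ∀ u v : ZMod 9, 3 * u ≠ 0 ∨ 3 * v ≠ 0 →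
    3 * (3 * u ^ 2 - v ^ 2) = 0 → 3 * u ^ 2 - v ^ 2 ≠ 6 := by
  decide

section

variable {x y u v : ℤ}

theorem odd_sq_sub_mul_add_sq (h : IsCoprime x y) : Odd (x ^ 2 - x * y + y ^ 2) := by
  have : ¬(Even x ∧ Even y) := fun ⟨hx, hy⟩ => by
    simpa [Int.isUnit_iff] using h.isUnit_of_dvd' hx.two_dvd hy.two_dvd
  rw [← Int.not_even_iff_odd]
  simp only [Int.even_add, Int.even_sub, Int.even_mul, Int.even_pow] at this ⊢
  tauto

theorem sq_sub_mul_add_sq_pos (h : IsCoprime x y) : 0 < x ^ 2 - x * y + y ^ 2 := by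
  have : x ≠ 0 ∨ y ≠ 0 := by
    by_contra! h0
    exact not_isCoprime_zero_zero (h0.1 ▸ h0.2 ▸ h)
  rcases this with hx | hy
  · nlinarith [sq_pos_of_ne_zero hx, sq_nonneg (x - 2 * y)]
  · nlinarith [sq_pos_of_ne_zero hy, sq_nonneg (2 * x - y)]

theorem isCoprime_sq_sub_mul_add_sq (h : IsCoprime x y) : IsCoprime y (x ^ 2 - x * y + y ^ 2) := by
  have := (h.symm.pow_right (n := 2)).add_mul_left_right (y - x)
  rwa [show x ^ 2 + y * (y - x) = x ^ 2 - x * y + y ^ 2 by ring] at this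

theorem not_three_dvd_sq_sub_mul_add_sq (hxy : IsCoprime x y) (huv : IsCoprime u v)
    (h : 2 * (x ^ 2 - x * y + y ^ 2) = 3 * u ^ 2 - v ^ 2) : ¬3 ∣ x ^ 2 - x * y + y ^ 2 := by
  intro h3
  have hcast : ∀ {a b : ℤ}, IsCoprime a b → 3 * (a : ZMod 9) ≠ 0 ∨ 3 * (b : ZMod 9) ≠ 0 := by
    intro a b hab
    simp only [ne_eq, three_mul_intCast_zmod_nine_eq_zero_iff, ← not_and_or]
    exact fun ⟨ha, hb⟩ => by simpa [Int.isUnit_iff] using hab.isUnit_of_dvd' ha hb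
  have h9 := congrArg (Int.cast : ℤ → ZMod 9) h
  push_cast at h9
  have hm : (x : ZMod 9) ^ 2 - x * y + y ^ 2 = 3 :=
    ZMod.sq_sub_mul_add_sq_eq_three _ _ (hcast hxy)
      (by exact_mod_cast (three_mul_intCast_zmod_nine_eq_zero_iff _).2 h3)
  refine ZMod.three_mul_sq_sub_sq_ne_six _ _ (hcast huv) ?_ ?_ <;> rw [← h9, hm] <;> decide

theorem isCoprime_of_two_mul_eq_three_mul_sq_sub_sq {m : ℤ} (huv : IsCoprime u v)
    (h : 2 * m = 3 * u ^ 2 - v ^ 2) (h3 : ¬3 ∣ m) : IsCoprime v m := by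
  have hv3 : IsCoprime v 3 := by
    refine (Int.prime_three.coprime_iff_not_dvd.2 fun ⟨w, hw⟩ => h3 ?_).symm
    have : 3 ∣ 2 * m := ⟨u ^ 2 - 3 * w ^ 2, by rw [h, hw]; ring⟩
    exact (Int.prime_three.dvd_or_dvd this).resolve_left (by norm_num)
  have := (hv3.mul_right (huv.symm.pow_right (n := 2))).add_mul_left_right (-v)
  rw [show 3 * u ^ 2 + v * -v = 2 * m by rw [h]; ring] at this
  exact this.of_mul_right_right

theorem exists_isCoprime_two_mul_sq_sub_mul_add_sq_eq_sq_add_sq (hxy : IsCoprime x y)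
    (huv : IsCoprime u v) (h : 2 * (x ^ 2 - x * y + y ^ 2) = 3 * u ^ 2 - v ^ 2) :
    ∃ a b : ℤ, IsCoprime a b ∧ 2 * (x ^ 2 - x * y + y ^ 2) = a ^ 2 + b ^ 2 := by
  have hodd := odd_sq_sub_mul_add_sq hxy
  have hyv : IsCoprime (y * v) (x ^ 2 - x * y + y ^ 2) :=
    (isCoprime_sq_sub_mul_add_sq hxy).mul_left <|
      isCoprime_of_two_mul_eq_three_mul_sq_sub_sq huv h (not_three_dvd_sq_sub_mul_add_sq hxy huv h)
  have hsum : x ^ 2 - x * y + y ^ 2 ∣ ((2 * x - y) * u) ^ 2 + (y * v) ^ 2 :=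
    ⟨2 * (2 * u ^ 2 - y ^ 2), by linear_combination y ^ 2 * h⟩
  obtain ⟨s, hs⟩ := Int.exists_dvd_sq_add_one_of_dvd_sq_add_sq hsum hyv
  obtain ⟨a, b, hab, hm⟩ :=
    Int.exists_isCoprime_sq_add_sq_of_dvd_sq_add_one (sq_sub_mul_add_sq_pos hxy) hodd hs
  exact ⟨a + b, a - b, isCoprime_add_sub_of_odd_sq_add_sq hab (hm ▸ hodd), by rw [hm]; ring⟩

end

theorem stmt_14 :
    let A : Set ℤ := {n | ∃ x y : ℤ, Int.gcd x y = 1 ∧ n = 3*x^2 - y^2}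
    let B : Set ℤ := {n | ∃ x y : ℤ, Int.gcd x y = 1 ∧ n = x^2 + y^2}
    let C : Set ℤ := {n | ∃ x y : ℤ, Int.gcd x y = 1 ∧ n = 2*(x^2 - x*y + y^2)}
    C ∩ A ⊆ B ∧ ¬ (B ⊆ C ∩ A) := by
  intro A B C
  refine ⟨?_, fun hBCA => ?_⟩
  · rintro n ⟨⟨x, y, hxy, rfl⟩, u, v, huv, h⟩
    obtain ⟨a, b, hab, hn⟩ := exists_isCoprime_two_mul_sq_sub_mul_add_sq_eq_sq_add_sq
      (Int.isCoprime_iff_gcd_eq_one.2 hxy) (Int.isCoprime_iff_gcd_eq_one.2 huv) h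
    exact ⟨a, b, Int.isCoprime_iff_gcd_eq_one.1 hab, hn⟩
  · obtain ⟨⟨x, y, -, h1⟩, -⟩ := hBCA (show (1 : ℤ) ∈ B from ⟨1, 0, by norm_num⟩)
    have : (2 : ℤ) ∣ 1 := ⟨_, h1⟩
    norm_num at this
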